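/- arXiv:1805.03332 — 3 statements merged into one kernel-verified Lean document; each statement's English description precedes it below -/
import Mathlib

section
/- There exists a constant c > 0 such that for all ε with 0 < ε ≤ 1/2 and all φ with 0 ≤ φ ≤ ε^{3/4}, the inequality |∫₀^φ dx/√(sinh²(x/2) + ε²) − 2·arcsinh(φ/(2ε))| ≤ c·ε^{3/4} holds. -/
/-!
For `y ≥ 0` we have `y ≤ sinh y ≤ y + y³`, so on `[0, 1]` the quantity `sinh² y` exceeds `y²` by at
most `3y⁴`. Hence the integrand lies below `1 / √((x/2)² + ε²)`, the derivative of
`2 arsinh (x / (2ε))`, and falls short of it by at most `3x² / (8ε)`. Integrating over `[0, φ]`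
bounds the error by `φ³ / (8ε) ≤ ε^{9/4} / (8ε) ≤ ε^{3/4} / 8`.
-/

open Real MeasureTheory

lemma sinh_le_self_add_pow_three {y : ℝ} (h0 : 0 ≤ y) (h1 : y ≤ 1) : sinh y ≤ y + y ^ 3 := by
  have hy : |y| ≤ 1 := by rwa [abs_of_nonneg h0]
  have hexp := abs_sub_le_iff.1 (exp_bound hy (n := 4) (by norm_num))
  have hexp_neg :=
    abs_sub_le_iff.1 (exp_bound (x := -y) (by rwa [abs_neg]) (n := 4) (by norm_num))
  simp only [Finset.sum_range_succ, Finset.sum_range_zero, abs_neg, abs_of_nonneg h0]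
    at hexp hexp_neg
  norm_num [Nat.factorial] at hexp hexp_neg
  rw [sinh_eq]
  nlinarith [pow_le_pow_left₀ h0 h1 4, pow_le_pow_left₀ h0 h1 3]

lemma sq_le_sinh_sq (y : ℝ) : y ^ 2 ≤ sinh y ^ 2 := by
  rcases le_total 0 y with hy | hy
  · exact pow_le_pow_left₀ hy (self_le_sinh_iff.2 hy) 2
  · simpa using pow_le_pow_left₀ (neg_nonneg.2 hy) (self_le_sinh_iff.2 (neg_nonneg.2 hy)) 2

lemma sinh_sq_sub_sq_le {y : ℝ} (h0 : 0 ≤ y) (h1 : y ≤ 1) : sinh y ^ 2 - y ^ 2 ≤ 3 * y ^ 4 := by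
  have hsinh := sinh_le_self_add_pow_three h0 h1
  have hy2 : y ^ 2 ≤ 1 := pow_le_one₀ h0 h1
  calc sinh y ^ 2 - y ^ 2 ≤ (y + y ^ 3) ^ 2 - y ^ 2 := by gcongr
    _ = 2 * y ^ 4 + y ^ 4 * y ^ 2 := by ring
    _ ≤ 3 * y ^ 4 := by nlinarith [pow_nonneg h0 4]

lemma one_div_sqrt_sub_one_div_sqrt_le {a b : ℝ} (hb : 0 < b) (hba : b ≤ a) :
    1 / √b - 1 / √a ≤ (a - b) / (2 * b * √b) := by
  have hsb : 0 < √b := sqrt_pos.2 hb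
  have hsba : √b ≤ √a := sqrt_le_sqrt hba
  have hsa : 0 < √a := hsb.trans_le hsba
  calc 1 / √b - 1 / √a = (√a ^ 2 - √b ^ 2) / (√a * √b * (√a + √b)) := by field_simp; ring
    _ ≤ (√a ^ 2 - √b ^ 2) / (√b * √b * (√b + √b)) := by
        gcongr
        nlinarith
    _ = (a - b) / (2 * b * √b) := by
        rw [sq_sqrt hb.le, sq_sqrt (hb.le.trans hba), mul_self_sqrt hb.le]; ring

lemma one_div_sqrt_sinh_sq_add_sq_le {ε : ℝ} (hε : 0 < ε) (y : ℝ) :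
    1 / √(sinh y ^ 2 + ε ^ 2) ≤ 1 / √(y ^ 2 + ε ^ 2) := by
  have hy : 0 < y ^ 2 + ε ^ 2 := by positivity
  exact one_div_le_one_div_of_le (sqrt_pos.2 hy) (sqrt_le_sqrt (by linarith [sq_le_sinh_sq y]))

lemma one_div_sqrt_sq_add_sq_sub_le {ε y : ℝ} (hε : 0 < ε) (h0 : 0 ≤ y) (h1 : y ≤ 1) :
    1 / √(y ^ 2 + ε ^ 2) - 1 / √(sinh y ^ 2 + ε ^ 2) ≤ 3 * y ^ 2 / (2 * ε) := by
  have hb : 0 < y ^ 2 + ε ^ 2 := by positivity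
  have hε_le : ε ≤ √(y ^ 2 + ε ^ 2) := le_sqrt_of_sq_le (by nlinarith)
  calc 1 / √(y ^ 2 + ε ^ 2) - 1 / √(sinh y ^ 2 + ε ^ 2)
      ≤ (sinh y ^ 2 - y ^ 2) / (2 * (y ^ 2 + ε ^ 2) * √(y ^ 2 + ε ^ 2)) := by
        have h := one_div_sqrt_sub_one_div_sqrt_le hb
          (a := sinh y ^ 2 + ε ^ 2) (by linarith [sq_le_sinh_sq y])
        rwa [add_sub_add_right_eq_sub] at h
    _ ≤ 3 * y ^ 2 * (y ^ 2 + ε ^ 2) / (2 * (y ^ 2 + ε ^ 2) * ε) := by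
        gcongr
        calc sinh y ^ 2 - y ^ 2 ≤ 3 * y ^ 4 := sinh_sq_sub_sq_le h0 h1
          _ ≤ 3 * y ^ 2 * (y ^ 2 + ε ^ 2) := by nlinarith [sq_nonneg (y * ε)]
    _ = 3 * y ^ 2 / (2 * ε) := by field_simp

theorem hasDerivAt_two_mul_arsinh_div {ε : ℝ} (hε : 0 < ε) (x : ℝ) :
    HasDerivAt (fun x => 2 * arsinh (x / (2 * ε))) (1 / √((x / 2) ^ 2 + ε ^ 2)) x := by
  have hsqrt : √((x / 2) ^ 2 + ε ^ 2) = ε * √(1 + (x / (2 * ε)) ^ 2) := by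
    rw [show (x / 2) ^ 2 + ε ^ 2 = ε ^ 2 * (1 + (x / (2 * ε)) ^ 2) by field_simp; ring,
      sqrt_mul (sq_nonneg ε), sqrt_sq hε.le]
  refine ((((hasDerivAt_id' x).div_const (2 * ε)).arsinh).const_mul 2).congr_deriv ?_
  have hpos : 0 < √(1 + (x / (2 * ε)) ^ 2) := by positivity
  rw [hsqrt, smul_eq_mul]
  field_simp

theorem integral_one_div_sqrt_sq_add_sq {ε : ℝ} (hε : 0 < ε) (φ : ℝ) :
    ∫ x in (0 : ℝ)..φ, 1 / √((x / 2) ^ 2 + ε ^ 2) = 2 * arsinh (φ / (2 * ε)) := by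
  rw [intervalIntegral.integral_eq_sub_of_hasDerivAt
    (fun x _ => hasDerivAt_two_mul_arsinh_div hε x)]
  · simp
  · exact (continuous_const.div (by fun_prop) fun x => by positivity).intervalIntegrable _ _

theorem abs_integral_one_div_sqrt_sinh_sq_add_sq_sub_le {ε φ : ℝ} (hε : 0 < ε) (h0 : 0 ≤ φ)
    (h2 : φ ≤ 2) :
    |(∫ x in (0 : ℝ)..φ, 1 / √(sinh (x / 2) ^ 2 + ε ^ 2)) - 2 * arsinh (φ / (2 * ε))|
      ≤ φ ^ 3 / (8 * ε) := by
  have hf : IntervalIntegrable (fun x => 1 / √(sinh (x / 2) ^ 2 + ε ^ 2)) volume 0 φ :=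
    (continuous_const.div (by fun_prop) fun x => by positivity).intervalIntegrable _ _
  have hg : IntervalIntegrable (fun x => 1 / √((x / 2) ^ 2 + ε ^ 2)) volume 0 φ :=
    (continuous_const.div (by fun_prop) fun x => by positivity).intervalIntegrable _ _
  have hquad : IntervalIntegrable (fun x => 3 / (8 * ε) * x ^ 2) volume 0 φ :=
    (by fun_prop : Continuous fun x : ℝ => 3 / (8 * ε) * x ^ 2).intervalIntegrable _ _
  rw [← integral_one_div_sqrt_sq_add_sq hε φ, abs_sub_comm,
    ← intervalIntegral.integral_sub hg hf, abs_of_nonneg]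
  · calc _ ≤ ∫ x in (0 : ℝ)..φ, 3 / (8 * ε) * x ^ 2 := by
          refine intervalIntegral.integral_mono_on h0 (hg.sub hf) hquad fun x hx => ?_
          calc _ ≤ 3 * (x / 2) ^ 2 / (2 * ε) :=
                one_div_sqrt_sq_add_sq_sub_le hε (by linarith [hx.1]) (by linarith [hx.2])
            _ = 3 / (8 * ε) * x ^ 2 := by field_simp; ring
      _ = φ ^ 3 / (8 * ε) := by
          rw [intervalIntegral.integral_const_mul, integral_pow]
          field_simp
          ring
  · exact intervalIntegral.integral_nonneg h0 fun x _ =>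
      sub_nonneg.2 (one_div_sqrt_sinh_sq_add_sq_le hε (x / 2))

/-- Inner-region approximation: there exists c > 0 such that for all
0 < ε ≤ 1/2 and 0 ≤ φ ≤ ε^{3/4},
|∫₀^φ dx/√(sinh²(x/2) + ε²) − 2·arcsinh(φ/(2ε))| ≤ c·ε^{3/4}. -/
theorem stmt5 :
    ∃ c : ℝ, 0 < c ∧ ∀ ε : ℝ, 0 < ε → ε ≤ 1 / 2 →
      ∀ φ : ℝ, 0 ≤ φ → φ ≤ ε ^ ((3 : ℝ) / 4) →
        |(∫ x in (0 : ℝ)..φ, 1 / Real.sqrt (Real.sinh (x / 2) ^ 2 + ε ^ 2))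
            - 2 * Real.arsinh (φ / (2 * ε))|
          ≤ c * ε ^ ((3 : ℝ) / 4) := by
  refine ⟨1 / 8, by norm_num, fun ε hε hε_half φ hφ0 hφ => ?_⟩
  have hε1 : ε ≤ 1 := hε_half.trans (by norm_num)
  have hφ1 : φ ≤ 1 := hφ.trans (rpow_le_one hε.le hε1 (by norm_num))
  have hcube : φ ^ 3 ≤ ε ^ ((3 : ℝ) / 4) * ε := by
    calc φ ^ 3 ≤ (ε ^ ((3 : ℝ) / 4)) ^ 3 := by gcongr
      _ = ε ^ ((3 : ℝ) / 4) * ε ^ ((3 : ℝ) / 2) := by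
          rw [← rpow_natCast, ← rpow_mul hε.le, ← rpow_add hε]; norm_num
      _ ≤ ε ^ ((3 : ℝ) / 4) * ε := by
          gcongr
          simpa using rpow_le_rpow_of_exponent_ge hε hε1 (show (1 : ℝ) ≤ 3 / 2 by norm_num)
  calc _ ≤ φ ^ 3 / (8 * ε) :=
        abs_integral_one_div_sqrt_sinh_sq_add_sq_sub_le hε hφ0 (by linarith)
    _ ≤ 1 / 8 * ε ^ ((3 : ℝ) / 4) := by
        rw [div_le_iff₀ (by positivity)]
        linarith
end

section
/- There exists a constant c > 0 such that for all ε with 0 < ε ≤ 1/2 and all φ with ε^{3/4} ≤ φ ≤ 10, the inequality |∫_{ε^{3/4}}^φ dx/√(sinh²(x/2) + ε²) − 4·(arccoth(e^{ε^{3/4}/2}) − arccoth(e^{φ/2}))| ≤ c·√ε holds. -/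
/-!
Since `-4 arccoth (exp (x / 2))` is an antiderivative of `1 / sinh (x / 2)`, the arccoth term is
`∫ 1 / sinh (x / 2)` over the same interval. For `s > 0`, `0 ≤ 1 / s - 1 / √(s² + ε²) ≤ ε² / (2 s³)`,
and `sinh (x / 2) ≥ x / 2` turns this into `4 ε² / x³`, whose integral from `ε ^ (3/4)` on is at
most `2 ε² / ε ^ (3/2) = 2 √ε`.
-/

open Real

/-- arccoth(y) = (1/2)·log((y+1)/(y−1)) for y > 1. -/
noncomputable def arccoth (y : ℝ) : ℝ := (1 / 2) * Real.log ((y + 1) / (y - 1))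

lemma hasDerivAt_arccoth {y : ℝ} (h₁ : y ≠ 1) (h₂ : y ≠ -1) :
    HasDerivAt arccoth (1 / (1 - y ^ 2)) y := by
  have hp : y + 1 ≠ 0 := fun h => h₂ (by linarith)
  have hm : y - 1 ≠ 0 := sub_ne_zero.mpr h₁
  have hq := (((hasDerivAt_id y).add_const 1).div ((hasDerivAt_id y).sub_const 1) hm).log
    (div_ne_zero hp hm)
  refine (hq.const_mul (1 / 2)).congr_deriv ?_
  have : 1 - y ^ 2 ≠ 0 := by
    intro h; have : (y - 1) * (y + 1) = 0 := by linear_combination -h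
    rcases mul_eq_zero.mp this with h | h <;> contradiction
  simp only [id, Pi.div_apply]
  field_simp
  ring

lemma hasDerivAt_arccoth_exp_half {x : ℝ} (hx : x ≠ 0) :
    HasDerivAt (fun y => arccoth (exp (y / 2))) (-(1 / (4 * sinh (x / 2)))) x := by
  have hu : exp (x / 2) ≠ 1 := by simpa using hx
  have hd := (hasDerivAt_arccoth hu (by linarith [exp_pos (x / 2)])).comp x
      ((hasDerivAt_id x).div_const 2).exp
  refine hd.congr_deriv ?_
  simp only [id, sinh_eq, exp_neg]
  set u := exp (x / 2)
  have : u ≠ 0 := (exp_pos _).ne'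
  have hu2 : u ^ 2 ≠ 1 := by simpa [u, ← exp_nat_mul] using hx
  have : 1 - u ^ 2 ≠ 0 := sub_ne_zero.mpr hu2.symm
  have : u ^ 2 - 1 ≠ 0 := sub_ne_zero.mpr hu2
  field_simp
  ring

lemma intervalIntegrable_one_div_sinh_half {a b : ℝ} (h : (0 : ℝ) ∉ Set.uIcc a b) :
    IntervalIntegrable (fun x => 1 / sinh (x / 2)) MeasureTheory.volume a b :=
  (continuousOn_const.div (by fun_prop) fun x hx => by
    simpa using (fun h0 : x = 0 => h (h0 ▸ hx))).intervalIntegrable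

lemma integral_one_div_sinh_half {a b : ℝ} (h : (0 : ℝ) ∉ Set.uIcc a b) :
    ∫ x in a..b, 1 / sinh (x / 2) = 4 * (arccoth (exp (a / 2)) - arccoth (exp (b / 2))) := by
  have hne : ∀ x ∈ Set.uIcc a b, x ≠ 0 := fun x hx h0 => h (h0 ▸ hx)
  rw [intervalIntegral.integral_eq_sub_of_hasDerivAt (f := fun y => -4 * arccoth (exp (y / 2)))
    (fun x hx => ((hasDerivAt_arccoth_exp_half (hne x hx)).const_mul (-4)).congr_deriv
      (by field_simp))
    (intervalIntegrable_one_div_sinh_half h)]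
  ring

lemma abs_one_div_sqrt_sq_add_sq_sub_one_div_le {s : ℝ} (hs : 0 < s) (e : ℝ) :
    |1 / √(s ^ 2 + e ^ 2) - 1 / s| ≤ e ^ 2 / (2 * s ^ 3) := by
  set r := √(s ^ 2 + e ^ 2)
  have hr2 : r ^ 2 = s ^ 2 + e ^ 2 := sq_sqrt (by positivity)
  have hsr : s ≤ r := le_sqrt_of_sq_le (by nlinarith)
  have hr : 0 < r := hs.trans_le hsr
  rw [abs_sub_comm, abs_of_nonneg (sub_nonneg.mpr (one_div_le_one_div_of_le hs hsr)),
    div_sub_div _ _ hs.ne' hr.ne', div_le_div_iff₀ (by positivity) (by positivity)]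
  -- `e² (s r) = (r - s)(r + s) s r ≥ 2 s³ (r - s)` because `r ≥ s`
  have he : e ^ 2 = (r - s) * (r + s) := by linear_combination hr2.symm
  rw [he]
  nlinarith [mul_nonneg (mul_nonneg hs.le (sub_nonneg.mpr hsr))
    (by nlinarith : (0:ℝ) ≤ (r + s) * r - 2 * s ^ 2)]

lemma abs_one_div_sqrt_sinh_sq_add_sq_sub_le {x : ℝ} (hx : 0 < x) (e : ℝ) :
    |1 / √(sinh (x / 2) ^ 2 + e ^ 2) - 1 / sinh (x / 2)| ≤ 4 * e ^ 2 * x ^ (-3 : ℤ) := by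
  have hs : x / 2 < sinh (x / 2) := self_lt_sinh_iff.mpr (by positivity)
  refine (abs_one_div_sqrt_sq_add_sq_sub_one_div_le (by positivity) e).trans ?_
  calc e ^ 2 / (2 * sinh (x / 2) ^ 3) ≤ e ^ 2 / (2 * (x / 2) ^ 3) := by gcongr
    _ = 4 * e ^ 2 * x ^ (-3 : ℤ) := by
      rw [zpow_neg, zpow_ofNat]
      field_simp
      ring

lemma abs_integral_one_div_sqrt_sub_arccoth_le {a b : ℝ} (ha : 0 < a) (hab : a ≤ b) (e : ℝ) :
    |(∫ x in a..b, 1 / √(sinh (x / 2) ^ 2 + e ^ 2))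
      - 4 * (arccoth (exp (a / 2)) - arccoth (exp (b / 2)))| ≤ 2 * e ^ 2 / a ^ 2 := by
  have h0 : (0 : ℝ) ∉ Set.uIcc a b := by
    rw [Set.uIcc_of_le hab]; exact fun h => ha.not_ge h.1
  have hsqrt : IntervalIntegrable (fun x => 1 / √(sinh (x / 2) ^ 2 + e ^ 2))
      MeasureTheory.volume a b :=
    (continuousOn_const.div (by fun_prop) fun x hx => by
      rw [Set.uIcc_of_le hab] at hx
      have := sinh_pos_iff.mpr (half_pos (ha.trans_le hx.1))
      positivity).intervalIntegrable
  rw [← integral_one_div_sinh_half h0, ← intervalIntegral.integral_sub hsqrt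
    (intervalIntegrable_one_div_sinh_half h0), ← Real.norm_eq_abs]
  calc _ ≤ ∫ x in a..b, 4 * e ^ 2 * x ^ (-3 : ℤ) :=
        intervalIntegral.norm_integral_le_of_norm_le hab
          (MeasureTheory.ae_of_all _ fun x hx =>
            abs_one_div_sqrt_sinh_sq_add_sq_sub_le (ha.trans hx.1) e)
          ((intervalIntegral.intervalIntegrable_zpow (Or.inr h0)).const_mul _)
    _ = 2 * e ^ 2 / a ^ 2 - 2 * e ^ 2 / b ^ 2 := by
        rw [intervalIntegral.integral_const_mul, integral_zpow (Or.inr ⟨by norm_num, h0⟩)]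
        norm_num
        ring
    _ ≤ 2 * e ^ 2 / a ^ 2 := by
        have : 0 ≤ 2 * e ^ 2 / b ^ 2 := by positivity
        linarith

lemma sq_div_rpow_three_fourths_sq {ε : ℝ} (hε : 0 < ε) :
    ε ^ 2 / (ε ^ ((3 : ℝ) / 4)) ^ 2 = √ε := by
  rw [← rpow_natCast (ε ^ _) 2, ← rpow_mul hε.le, ← rpow_natCast ε 2, ← rpow_sub hε, sqrt_eq_rpow]
  norm_num

/-- Outer-region approximation: there exists c > 0 such that for all
0 < ε ≤ 1/2 and ε^{3/4} ≤ φ ≤ 10,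
|∫_{ε^{3/4}}^φ dx/√(sinh²(x/2) + ε²)
  − 4·(arccoth(e^{ε^{3/4}/2}) − arccoth(e^{φ/2}))| ≤ c·√ε. -/
theorem stmt6 :
    ∃ c : ℝ, 0 < c ∧ ∀ ε : ℝ, 0 < ε → ε ≤ 1 / 2 →
      ∀ φ : ℝ, ε ^ ((3 : ℝ) / 4) ≤ φ → φ ≤ 10 →
        |(∫ x in (ε ^ ((3 : ℝ) / 4))..φ,
            1 / Real.sqrt (Real.sinh (x / 2) ^ 2 + ε ^ 2))
          - 4 * (arccoth (Real.exp (ε ^ ((3 : ℝ) / 4) / 2))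
                  - arccoth (Real.exp (φ / 2)))|
          ≤ c * Real.sqrt ε := by
  refine ⟨2, two_pos, fun ε hε _ φ hφ _ => ?_⟩
  have h := abs_integral_one_div_sqrt_sub_arccoth_le (rpow_pos_of_pos hε _) hφ ε
  rwa [mul_div_assoc, sq_div_rpow_three_fourths_sq hε] at h
end

section
/- Let φ be as above and set ε = φ'(0)/(2√α) with φ'(0) > 0. Then for all ψ ∈ [0, V], x(ψ) = (1/(2√α))·∫₀^ψ dξ/√(sinh²(ξ/2) + ε²), and the boundary condition x(V) = L/2 is equivalent to √α·L = ∫₀^V dξ/√(sinh²(ξ/2) + ε²). -/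
/-!
Multiplying `φ'' = α sinh φ` by `φ'` gives the first integral `φ'² - 2α cosh φ = φ'(0)² - 2α`
(since `φ(0) = 0` by oddness). With `cosh φ = 1 + 2 sinh²(φ/2)` and `φ' > 0` this reads
`φ' = 2√α · √(sinh²(φ/2) + ε²)`, so `1 / √(sinh²(φ/2) + ε²) · φ' = 2√α`; integrating from `0`
to `x` and substituting `ξ = φ(t)` gives `2√α · x = ∫₀^{φ(x)} dξ / √(sinh²(ξ/2) + ε²)`.
-/

open Real Set

theorem cosh_eq_two_mul_sinh_half_sq_add_one (y : ℝ) : cosh y = 2 * sinh (y / 2) ^ 2 + 1 := by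
  have h := cosh_two_mul (y / 2)
  rw [mul_div_cancel₀ y two_ne_zero, cosh_sq] at h
  linarith

theorem hasDerivAt_deriv_of_contDiffOn_Icc {f : ℝ → ℝ} {a b t : ℝ}
    (hf : ContDiffOn ℝ 2 f (Icc a b)) (ht : t ∈ Ioo a b) :
    HasDerivAt (deriv f) (deriv (deriv f) t) t := by
  have hf' : ContDiffOn ℝ 1 (deriv f) (Ioo a b) :=
    (hf.mono Ioo_subset_Icc_self).deriv_of_isOpen isOpen_Ioo (by norm_num)
  exact ((hf'.differentiableOn one_ne_zero t ht).differentiableAt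
    (isOpen_Ioo.mem_nhds ht)).hasDerivAt

theorem continuousOn_deriv_of_contDiffOn_Icc {f : ℝ → ℝ} {a b : ℝ} (hab : a < b)
    (hf : ContDiffOn ℝ 1 f (Icc a b)) (hd : ∀ t ∈ Icc a b, DifferentiableAt ℝ f t) :
    ContinuousOn (deriv f) (Icc a b) := by
  have hU : UniqueDiffOn ℝ (Icc a b) := uniqueDiffOn_Icc hab
  refine (hf.continuousOn_derivWithin hU le_rfl).congr fun t ht => ?_
  exact ((hd t ht).hasDerivAt.hasDerivWithinAt.derivWithin (hU t ht)).symm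

theorem sq_sub_two_mul_comp_eq_of_hasDerivAt {f f' g G : ℝ → ℝ} {a b : ℝ}
    (hG : ∀ y, HasDerivAt G (g y) y) (hf : ∀ t ∈ Icc a b, HasDerivAt f (f' t) t)
    (hf' : ContinuousOn f' (Icc a b)) (hf'' : ∀ t ∈ Ioo a b, HasDerivAt f' (g (f t)) t) :
    ∀ t ∈ Icc a b, f' t ^ 2 - 2 * G (f t) = f' a ^ 2 - 2 * G (f a) := by
  set E : ℝ → ℝ := fun t => f' t ^ 2 - 2 * G (f t)
  intro t ht
  rcases ht.1.eq_or_lt with rfl | hat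
  · rfl
  have hsub : Icc a t ⊆ Icc a b := Icc_subset_Icc le_rfl ht.2
  have hE_cont : ContinuousOn E (Icc a t) := by
    have hf_cont : ContinuousOn f (Icc a b) := fun s hs => (hf s hs).continuousAt.continuousWithinAt
    have hG_cont : Continuous G := continuous_iff_continuousAt.2 fun y => (hG y).continuousAt
    exact ((hf'.pow 2).sub (continuousOn_const.mul (hG_cont.comp_continuousOn hf_cont))).mono hsub
  have hE_deriv : ∀ s ∈ Ioo a t, HasDerivAt E 0 s := by
    intro s hs
    have hs' : s ∈ Ioo a b := ⟨hs.1, hs.2.trans_le ht.2⟩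
    have hs_deriv := ((hf'' s hs').pow 2).sub
      (((hG (f s)).comp s (hf s (Ioo_subset_Icc_self hs'))).const_mul 2)
    exact hs_deriv.congr_deriv (by push_cast; ring)
  obtain ⟨c, -, hc⟩ := exists_hasDerivAt_eq_slope E (fun _ => 0) hat hE_cont hE_deriv
  rw [eq_comm, div_eq_zero_iff, sub_eq_zero] at hc
  exact hc.resolve_right (sub_ne_zero.2 hat.ne')

theorem eq_two_mul_sqrt_of_sq_sub_two_mul_cosh_eq {α p c y : ℝ} (hα : 0 < α) (hp : 0 < p)
    (h : p ^ 2 - 2 * (α * cosh y) = c ^ 2 - 2 * α) :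
    p = 2 * √α * √(sinh (y / 2) ^ 2 + (c / (2 * √α)) ^ 2) := by
  have hsqrt : 0 < √α := sqrt_pos.2 hα
  have hsq : p ^ 2 = (2 * √α) ^ 2 * (sinh (y / 2) ^ 2 + (c / (2 * √α)) ^ 2) := by
    rw [cosh_eq_two_mul_sinh_half_sq_add_one] at h
    have hc : (2 * √α) ^ 2 * (c / (2 * √α)) ^ 2 = c ^ 2 := by field_simp
    rw [mul_add, hc, mul_pow, sq_sqrt hα.le]
    linarith
  rw [← sqrt_sq hp.le, hsq, sqrt_mul (by positivity), sqrt_sq (by positivity)]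

theorem integral_comp_eq_mul_of_comp_mul_deriv_eq {f f' g : ℝ → ℝ} {a b k : ℝ}
    (hf : ∀ t ∈ uIcc a b, HasDerivAt f (f' t) t) (hf' : ContinuousOn f' (uIcc a b))
    (hg : Continuous g) (hk : ∀ t ∈ uIcc a b, g (f t) * f' t = k) :
    ∫ u in f a..f b, g u = k * (b - a) := by
  rw [← intervalIntegral.integral_comp_mul_deriv hf hf' hg]
  simp only [Function.comp_apply]
  rw [intervalIntegral.integral_congr (g := fun _ => k) fun t ht => hk t ht,
    intervalIntegral.integral_const, smul_eq_mul, mul_comm]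

theorem integral_inv_sqrt_sinh_half_sq_add_sq_eq {f f' : ℝ → ℝ} {a b k ε : ℝ} (hε : ε ≠ 0)
    (hf : ∀ t ∈ uIcc a b, HasDerivAt f (f' t) t) (hf' : ContinuousOn f' (uIcc a b))
    (hk : ∀ t ∈ uIcc a b, f' t = k * √(sinh (f t / 2) ^ 2 + ε ^ 2)) :
    ∫ ξ in f a..f b, 1 / √(sinh (ξ / 2) ^ 2 + ε ^ 2) = k * (b - a) := by
  have hS : ∀ ξ, √(sinh (ξ / 2) ^ 2 + ε ^ 2) ≠ 0 := fun ξ => (sqrt_pos.2 (by positivity)).ne'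
  refine integral_comp_eq_mul_of_comp_mul_deriv_eq hf hf' (continuous_const.div (by fun_prop) hS)
    fun t ht => ?_
  rw [hk t ht]
  field_simp [hS (f t)]

theorem stmt12_general (L V α : ℝ) (hL : 0 < L) (hα : 0 < α) (φ : ℝ → ℝ)
    (hC2 : ContDiffOn ℝ 2 φ (Icc (-(L / 2)) (L / 2)))
    (hode : ∀ x ∈ Icc (-(L / 2)) (L / 2),
      deriv (deriv φ) x = α * Real.sinh (φ x))
    (hodd : ∀ x ∈ Icc (-(L / 2)) (L / 2), φ (-x) = -φ x)
    (hmono : ∀ x ∈ Icc (-(L / 2)) (L / 2), 0 < deriv φ x)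
    (hd0 : 0 < deriv φ 0)
    (ε : ℝ) (hεdef : ε = deriv φ 0 / (2 * Real.sqrt α)) :
    (∀ ψ ∈ Icc (0 : ℝ) V, ∀ x ∈ Icc (0 : ℝ) (L / 2), φ x = ψ →
      x = (1 / (2 * Real.sqrt α)) *
            ∫ ξ in (0 : ℝ)..ψ, 1 / Real.sqrt (Real.sinh (ξ / 2) ^ 2 + ε ^ 2)) ∧
    ((L / 2 = (1 / (2 * Real.sqrt α)) *
          ∫ ξ in (0 : ℝ)..V, 1 / Real.sqrt (Real.sinh (ξ / 2) ^ 2 + ε ^ 2)) ↔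
      Real.sqrt α * L
        = ∫ ξ in (0 : ℝ)..V, 1 / Real.sqrt (Real.sinh (ξ / 2) ^ 2 + ε ^ 2)) := by
  have hsqrt : 0 < √α := sqrt_pos.2 hα
  refine ⟨fun ψ _ x hx hφx => ?_, by constructor <;> intro h <;> field_simp at h ⊢ <;> linarith⟩
  have hsub : Icc 0 x ⊆ Icc (-(L / 2)) (L / 2) := Icc_subset_Icc (by linarith) hx.2
  have hφ0 : φ 0 = 0 := by linarith [neg_zero (G := ℝ) ▸ hodd 0 (hsub ⟨le_rfl, hx.1⟩)]
  have hφ' : ∀ t ∈ Icc (-(L / 2)) (L / 2), HasDerivAt φ (deriv φ t) t := fun t ht =>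
    (differentiableAt_of_deriv_ne_zero (hmono t ht).ne').hasDerivAt
  have hφ'_cont : ContinuousOn (deriv φ) (Icc 0 x) :=
    (continuousOn_deriv_of_contDiffOn_Icc (by linarith) (hC2.of_le one_le_two)
      fun t ht => (hφ' t ht).differentiableAt).mono hsub
  have henergy := sq_sub_two_mul_comp_eq_of_hasDerivAt (fun y => (hasDerivAt_cosh y).const_mul α)
    (fun t ht => hφ' t (hsub ht)) hφ'_cont fun t ht => by
      have ht' := hsub (Ioo_subset_Icc_self ht)
      rw [← hode t ht']
      exact hasDerivAt_deriv_of_contDiffOn_Icc hC2 ⟨by linarith [ht'.1, ht.1], ht.2.trans_le hx.2⟩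
  have hkey : ∀ t ∈ Icc 0 x, deriv φ t = 2 * √α * √(sinh (φ t / 2) ^ 2 + ε ^ 2) := fun t ht => by
    rw [hεdef]
    exact eq_two_mul_sqrt_of_sq_sub_two_mul_cosh_eq hα (hmono t (hsub ht))
      (by simpa [hφ0] using henergy t ht)
  have hε : ε ≠ 0 := by rw [hεdef]; positivity
  rw [← uIcc_of_le hx.1] at hsub hφ'_cont hkey
  have hint := integral_inv_sqrt_sinh_half_sq_add_sq_eq hε (fun t ht => hφ' t (hsub ht))
    hφ'_cont hkey
  rw [hφ0, sub_zero] at hint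
  rw [← hφx, hint]
  field_simp

/-- With ε = φ'(0)/(2√α), the inverse function satisfies
x(ψ) = (1/(2√α))·∫₀^ψ dξ/√(sinh²(ξ/2) + ε²), and x(V) = L/2 is
equivalent to √α·L = ∫₀^V dξ/√(sinh²(ξ/2) + ε²). -/
theorem stmt12 (L V α : ℝ) (hL : 0 < L) (hV : 0 < V) (hα : 0 < α) (φ : ℝ → ℝ)
    (hC2 : ContDiffOn ℝ 2 φ (Icc (-(L / 2)) (L / 2)))
    (hode : ∀ x ∈ Icc (-(L / 2)) (L / 2),
      deriv (deriv φ) x = α * Real.sinh (φ x))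
    (hodd : ∀ x ∈ Icc (-(L / 2)) (L / 2), φ (-x) = -φ x)
    (hbcL : φ (-(L / 2)) = -V) (hbcR : φ (L / 2) = V)
    (hmono : ∀ x ∈ Icc (-(L / 2)) (L / 2), 0 < deriv φ x)
    (hd0 : 0 < deriv φ 0)
    (ε : ℝ) (hεdef : ε = deriv φ 0 / (2 * Real.sqrt α)) :
    (∀ ψ ∈ Icc (0 : ℝ) V, ∀ x ∈ Icc (0 : ℝ) (L / 2), φ x = ψ →
      x = (1 / (2 * Real.sqrt α)) *
            ∫ ξ in (0 : ℝ)..ψ, 1 / Real.sqrt (Real.sinh (ξ / 2) ^ 2 + ε ^ 2)) ∧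
    ((L / 2 = (1 / (2 * Real.sqrt α)) *
          ∫ ξ in (0 : ℝ)..V, 1 / Real.sqrt (Real.sinh (ξ / 2) ^ 2 + ε ^ 2)) ↔
      Real.sqrt α * L
        = ∫ ξ in (0 : ℝ)..V, 1 / Real.sqrt (Real.sinh (ξ / 2) ^ 2 + ε ^ 2)) :=
  stmt12_general L V α hL hα φ hC2 hode hodd hmono hd0 ε hεdef
end
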